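/- arXiv:1302.5920 — 2 statements merged into one kernel-verified Lean document; each statement's English description precedes it below -/
import Mathlib

section
/- Let F₂ be the free group on a, b acting on its boundary Ω of infinite reduced words. This action is topologically free: for every g ∈ F₂ with g ≠ 1, the fixed point set {ω ∈ Ω : g·ω = ω} has empty interior in Ω. -/
/-- The letters `a, a⁻¹, b, b⁻¹`: a letter is a generator index in `Fin 2`
together with a sign. -/
abbrev Letter : Type := Fin 2 × Bool

/-- The formal inverse of a letter. -/
def letterInv (x : Letter) : Letter := (x.1, !x.2)

/-- The space of infinite reduced words, topologized as a subspace of the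
product space `Letter ^ ℕ`. -/
def Omega : Type := {x : ℕ → Letter // ∀ n, x (n + 1) ≠ letterInv (x n)}

instance : TopologicalSpace Omega :=
  inferInstanceAs (TopologicalSpace {x : ℕ → Letter // ∀ n, x (n + 1) ≠ letterInv (x n)})


/-- Prepend a single letter to an infinite reduced word, performing the free
reduction: if the word begins with the inverse letter, cancel it. -/
def prependLetter (x : Letter) (ω : Omega) : Omega :=
  if h : ω.1 0 = letterInv x then
    ⟨fun n => ω.1 (n + 1), fun n => ω.2 (n + 1)⟩
  else
    ⟨fun n => Nat.rec x (fun k _ => ω.1 k) n, by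
      intro n
      cases n with
      | zero => exact h
      | succ k => exact ω.2 k⟩

/-- The action of `g ∈ F₂` on an infinite reduced word: prepend the reduced word
of `g` letter by letter, reducing as one goes. -/
def freeAct (g : FreeGroup (Fin 2)) (ω : Omega) : Omega :=
  g.toWord.foldr prependLetter ω

/-!
If `g ≠ 1` has reduced word `w` and fixes `ω`, split `w = u ++ v` where `v` is the part that
cancels against the beginning of `ω`. Then `ω = u ++ (ω with its first |v| letters removed)`,
so `ω (|u| + i) = ω (|v| + i)` for all `i`. If `|u| = |v|`, the last letter of `u` would be the
inverse of the first letter of `v`, contradicting reducedness; hence `ω` is eventually periodic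
beyond `|w|`. But the cylinder of any word `μ` of any length `n` contains the word
`μ₀ ⋯ μₙ₋₁ c b a a a ⋯`, which is not, so no nonempty open set consists of fixed points.
-/

open Topology

theorem PiNat.exists_cylinder_subset_of_mem_nhds_subtype {E : ℕ → Type*}
    [∀ n, TopologicalSpace (E n)] [∀ n, DiscreteTopology (E n)] {p : (∀ n, E n) → Prop}
    {S : Set (Subtype p)} {μ : Subtype p} (hS : S ∈ 𝓝 μ) :
    ∃ n, Subtype.val ⁻¹' PiNat.cylinder μ.1 n ⊆ S := by
  obtain ⟨T, hT, hTS⟩ := (nhds_induced Subtype.val μ ▸ hS : S ∈ Filter.comap Subtype.val (𝓝 μ.1))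
  obtain ⟨_, ⟨x, n, rfl⟩, hμ, hsub⟩ :=
    ((PiNat.isTopologicalBasis_cylinders E).mem_nhds_iff).mp hT
  exact ⟨n, fun ω hω => hTS (hsub (PiNat.mem_cylinder_iff_eq.mp hμ ▸ hω))⟩

theorem exists_periodic_from_of_shift {α : Type*} {s : ℕ → α} {a b : ℕ} (hab : a ≠ b)
    (h : ∀ i, s (a + i) = s (b + i)) : ∃ p > 0, ∀ i ≥ max a b, s (i + p) = s i := by
  wlog hlt : a < b generalizing a b
  · simpa [max_comm] using this hab.symm (fun i => (h i).symm) (by omega)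
  refine ⟨b - a, by omega, fun i hi => ?_⟩
  calc s (i + (b - a)) = s (b + (i - a)) := by congr 1; omega
    _ = s (a + (i - a)) := (h _).symm
    _ = s i := by congr 1; omega

lemma letterInv_letterInv (x : Letter) : letterInv (letterInv x) = x := by
  simp [letterInv]

lemma isReduced_pair_iff {x y : Letter} : FreeGroup.IsReduced [x, y] ↔ y ≠ letterInv x := by
  obtain ⟨i, s⟩ := x; obtain ⟨j, t⟩ := y
  simp only [FreeGroup.IsReduced, List.isChain_pair, letterInv, ne_eq, Prod.mk.injEq]
  cases s <;> cases t <;> simp [eq_comm]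

lemma prependLetter_apply_of_eq {x : Letter} {ω : Omega} (h : ω.1 0 = letterInv x) (n : ℕ) :
    (prependLetter x ω).1 n = ω.1 (n + 1) := by
  simp [prependLetter, h]

lemma prependLetter_apply_zero {x : Letter} {ω : Omega} (h : ω.1 0 ≠ letterInv x) :
    (prependLetter x ω).1 0 = x := by
  simp [prependLetter, h]

lemma prependLetter_apply_succ {x : Letter} {ω : Omega} (h : ω.1 0 ≠ letterInv x) (n : ℕ) :
    (prependLetter x ω).1 (n + 1) = ω.1 n := by
  simp [prependLetter, h]

theorem foldr_prependLetter_spec (w : List Letter) (hw : FreeGroup.IsReduced w) (ω : Omega) :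
    ∃ u v, w = u ++ v ∧
      (∀ i (hi : i < u.length), (w.foldr prependLetter ω).1 i = u[i]) ∧
      (∀ i, (w.foldr prependLetter ω).1 (u.length + i) = ω.1 (v.length + i)) ∧
      (∀ j (hj : j < v.reverse.length), ω.1 j = letterInv v.reverse[j]) := by
  induction w with
  | nil => exact ⟨[], [], rfl, by simp, by simp, by simp⟩
  | cons x w ih =>
    obtain ⟨u, v, rfl, hpre, hshift, hcancel⟩ := ih (hw.infix ⟨[x], [], by simp⟩)
    simp only [List.foldr_cons]
    by_cases hc : ((u ++ v).foldr prependLetter ω).1 0 = letterInv x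
    · obtain rfl : u = [] := by
        rcases u with _ | ⟨y, u⟩
        · rfl
        · have hy : ((y :: u ++ v).foldr prependLetter ω).1 0 = y := hpre 0 (by simp)
          exact absurd (hy ▸ hc) (isReduced_pair_iff.mp (hw.infix ⟨[], u ++ v, by simp⟩))
      simp only [List.nil_append, List.length_nil, zero_add] at hc hshift ⊢
      refine ⟨[], x :: v, rfl, by simp, fun i => ?_, fun j hj => ?_⟩
      · rw [prependLetter_apply_of_eq hc, hshift]
        exact congrArg ω.1 (by simp only [List.length_cons, List.length_nil]; omega)
      · simp only [List.reverse_cons, List.length_append, List.length_reverse,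
          List.length_singleton] at hj ⊢
        rw [List.getElem_append]
        split_ifs with hjv
        · exact hcancel j hjv
        · obtain rfl : j = v.length := by simp only [List.length_reverse] at hjv; omega
          simpa [hc] using (hshift 0).symm
    · refine ⟨x :: u, v, rfl, fun i hi => ?_, fun i => ?_, hcancel⟩
      · cases i with
        | zero => exact prependLetter_apply_zero hc
        | succ i => exact (prependLetter_apply_succ hc i).trans (hpre i (by simpa using hi))
      · rw [List.length_cons, add_right_comm, prependLetter_apply_succ hc, hshift]

theorem exists_periodic_from_of_foldr_prependLetter_eq {w : List Letter}
    (hw : FreeGroup.IsReduced w) (hne : w ≠ []) {ω : Omega} (h : w.foldr prependLetter ω = ω) :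
    ∃ p > 0, ∀ i ≥ w.length, ω.1 (i + p) = ω.1 i := by
  obtain ⟨u, v, rfl, hpre, hshift, hcancel⟩ := foldr_prependLetter_spec w hw ω
  rw [h] at hpre hshift
  have huv : u.length ≠ v.length := by
    intro heq
    obtain ⟨u, y, rfl⟩ := (List.eq_nil_or_concat' u).resolve_left
      (by rintro rfl; simp [← List.length_eq_zero_iff, ← heq] at hne)
    obtain ⟨z, v, rfl⟩ := List.exists_cons_of_ne_nil (l := v) (by rintro rfl; simp at heq)
    have hy : ω.1 u.length = y := by simpa using hpre u.length (by simp)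
    have hz : ω.1 u.length = letterInv z := by
      simpa [List.getElem_reverse, show u.length = v.length by simpa using heq]
        using hcancel u.length (by simpa using heq.le)
    exact isReduced_pair_iff.mp (hw.infix (L₁ := [y, z]) ⟨u, v, by simp⟩)
      (by rw [← hy, hz, letterInv_letterInv])
  obtain ⟨p, hp, hper⟩ := exists_periodic_from_of_shift huv hshift
  exact ⟨p, hp, fun i hi => hper i (by simp only [List.length_append] at hi; omega)⟩

lemma ne_letterInv_of_snd {x y : Letter} (hx : x.2 = true) (hy : y.2 = true) :
    y ≠ letterInv x := by
  simp [letterInv, Prod.ext_iff, hx, hy]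

/-- `μ₀ ⋯ μₙ₋₁ c b a a a ⋯`, where `a = (0, true)`, `b = (1, true)`, and `c ∈ {a, b}` is chosen
so that it does not cancel `μₙ₋₁`. -/
def spliceSeq (μ : Omega) (n : ℕ) (i : ℕ) : Letter :=
  if i < n then μ.1 i
  else if i = n then (if μ.1 (n - 1) = letterInv (0, true) then (1, true) else (0, true))
  else if i = n + 1 then (1, true) else (0, true)

lemma spliceSeq_snd {μ : Omega} {n i : ℕ} (hi : n ≤ i) : (spliceSeq μ n i).2 = true := by
  unfold spliceSeq
  split_ifs <;> first | omega | rfl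

lemma spliceSeq_reduced (μ : Omega) (n i : ℕ) :
    spliceSeq μ n (i + 1) ≠ letterInv (spliceSeq μ n i) := by
  rcases lt_trichotomy (i + 1) n with hi | rfl | hi
  · simpa [spliceSeq, hi, (by omega : i < n)] using μ.2 i
  · by_cases hμ : μ.1 i = letterInv (0, true)
    · simp [spliceSeq, hμ, letterInv_letterInv]
    · simp only [spliceSeq, lt_irrefl, if_false, if_true, lt_add_one, add_tsub_cancel_right, hμ]
      exact fun h => hμ (by rw [h, letterInv_letterInv])
  · exact ne_letterInv_of_snd (spliceSeq_snd (by omega)) (spliceSeq_snd (by omega))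

def splice (μ : Omega) (n : ℕ) : Omega := ⟨spliceSeq μ n, spliceSeq_reduced μ n⟩

lemma splice_apply_of_lt {μ : Omega} {n i : ℕ} (hi : i < n) : (splice μ n).1 i = μ.1 i := by
  simp [splice, spliceSeq, hi]

lemma splice_apply_succ (μ : Omega) (n : ℕ) : (splice μ n).1 (n + 1) = (1, true) := by
  simp [splice, spliceSeq]

lemma splice_apply_of_succ_lt {μ : Omega} {n i : ℕ} (hi : n + 1 < i) :
    (splice μ n).1 i = (0, true) := by
  simp only [splice, spliceSeq, if_neg (show ¬ i < n by omega), if_neg (show i ≠ n by omega),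
    if_neg hi.ne']

/-- The boundary action of `F₂` is topologically free: no nontrivial group
element fixes a nonempty open set pointwise. -/
theorem stmt_9 :
    ∀ g : FreeGroup (Fin 2), g ≠ 1 →
      interior {ω : Omega | freeAct g ω = ω} = ∅ := by
  intro g hg
  refine Set.eq_empty_of_forall_notMem fun μ hμ => ?_
  obtain ⟨n, hn⟩ :=
    PiNat.exists_cylinder_subset_of_mem_nhds_subtype (mem_interior_iff_mem_nhds.mp hμ)
  set m := max n g.toWord.length
  have hfix : freeAct g (splice μ m) = splice μ m :=
    hn (PiNat.mem_cylinder_iff.mpr fun i hi => splice_apply_of_lt (by omega))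
  obtain ⟨p, hp, hper⟩ := exists_periodic_from_of_foldr_prependLetter_eq FreeGroup.isReduced_toWord
    (mt FreeGroup.toWord_eq_nil_iff.mp hg) hfix
  have hba := hper (m + 1) (by omega)
  rw [splice_apply_succ, splice_apply_of_succ_lt (by omega)] at hba
  exact absurd hba (by decide)
end

section
/- Let F be a field and p an upper triangular invertible 3×3 matrix over F that is not a scalar matrix. Then there exists an invertible 3×3 matrix k over F such that k⁻¹ p k is not upper triangular, provided F has more than 3 elements. -/
/-!
Suppose every conjugate of `p` is upper triangular. Conjugating by the permutation matrix of the
transposition `(i j)` moves the entry `p i j` to position `(j, i)`, so `p` is diagonal.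
Conjugating a diagonal `p` by the transvection `1 + E i j` puts `p i i - p j j` at position
`(i, j)`, so all diagonal entries agree and `p` is scalar.
-/

namespace Matrix

variable {n R : Type*} [Fintype n] [DecidableEq n] [CommRing R]

theorem swap_permMatrix_mul_self (i j : n) :
    (Equiv.swap i j).permMatrix R * (Equiv.swap i j).permMatrix R = 1 := by
  rw [← permMatrix_mul, Equiv.swap_mul_self, permMatrix_one]

theorem swap_permMatrix_conj_apply (p : Matrix n n R) (i j : n) :
    ((Equiv.swap i j).permMatrix R * p * (Equiv.swap i j).permMatrix R) j i = p i j := by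
  simp [PEquiv.toMatrix_toPEquiv_mul, PEquiv.mul_toMatrix_toPEquiv]

theorem transvection_conj_apply (p : Matrix n n R) (i j : n) :
    (transvection i j (-1) * p * transvection i j 1 : Matrix n n R) i j =
      p i j - p j i + p i i - p j j := by
  rw [Matrix.mul_assoc, transvection_mul_apply_same, mul_transvection_apply_same,
    mul_transvection_apply_same]
  ring

section ConjBlockTriangular

variable [LinearOrder n] {p : Matrix n n R}

theorem blockTriangular_conj_of_mul_eq_one
    (h : ∀ k : Matrix n n R, IsUnit k → BlockTriangular (k⁻¹ * p * k) id)
    {k k' : Matrix n n R} (hk : k' * k = 1) :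
    BlockTriangular (k' * p * k) id := by
  have := h k ((isUnit_iff_isUnit_det k).2 (isUnit_det_of_left_inverse hk))
  rwa [inv_eq_left_inv hk] at this

theorem apply_eq_zero_of_forall_conj_blockTriangular
    (h : ∀ k : Matrix n n R, IsUnit k → BlockTriangular (k⁻¹ * p * k) id)
    {i j : n} (hij : i ≠ j) : p i j = 0 := by
  rcases hij.lt_or_gt with hlt | hgt
  · rw [← swap_permMatrix_conj_apply p i j]
    exact blockTriangular_conj_of_mul_eq_one h (swap_permMatrix_mul_self i j) hlt
  · simpa using blockTriangular_conj_of_mul_eq_one h (one_mul 1) hgt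

theorem apply_eq_apply_of_forall_conj_blockTriangular
    (h : ∀ k : Matrix n n R, IsUnit k → BlockTriangular (k⁻¹ * p * k) id)
    (i j : n) : p i i = p j j := by
  wlog hlt : j < i generalizing i j
  · obtain rfl | hgt := (not_lt.1 hlt).eq_or_lt
    · rfl
    · exact (this j i hgt).symm
  have hinv : transvection i j (-1) * transvection i j 1 = (1 : Matrix n n R) := by
    rw [transvection_mul_transvection_same i j hlt.ne', neg_add_cancel, transvection_zero]
  have hzero := blockTriangular_conj_of_mul_eq_one h hinv hlt
  rw [transvection_conj_apply, apply_eq_zero_of_forall_conj_blockTriangular h hlt.ne',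
    apply_eq_zero_of_forall_conj_blockTriangular h hlt.ne] at hzero
  linear_combination hzero

theorem eq_smul_one_of_forall_conj_blockTriangular
    (h : ∀ k : Matrix n n R, IsUnit k → BlockTriangular (k⁻¹ * p * k) id)
    (i : n) : p = p i i • 1 := by
  ext a b
  obtain rfl | hab := eq_or_ne a b
  · simp [apply_eq_apply_of_forall_conj_blockTriangular h a i]
  · simp [apply_eq_zero_of_forall_conj_blockTriangular h hab, one_apply_ne hab]

end ConjBlockTriangular

end Matrix

theorem stmt_15_general (F : Type) [Field F]
    (p : Matrix (Fin 3) (Fin 3) F)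
    (hscalar : ¬∃ c : F, p = c • (1 : Matrix (Fin 3) (Fin 3) F)) :
    ∃ k : Matrix (Fin 3) (Fin 3) F, IsUnit k ∧
      ¬ Matrix.BlockTriangular (k⁻¹ * p * k) id := by
  by_contra! h
  exact hscalar ⟨p 0 0, Matrix.eq_smul_one_of_forall_conj_blockTriangular h 0⟩

/-- Over a field with more than 3 elements, every invertible upper triangular
`3×3` matrix that is not scalar is conjugate to a matrix that is not upper
triangular. -/
theorem stmt_15 (F : Type) [Field F]
    (hF : 3 < Nat.card F ∨ Infinite F)
    (p : Matrix (Fin 3) (Fin 3) F)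
    (hp : Matrix.BlockTriangular p id)
    (hunit : IsUnit p)
    (hscalar : ¬∃ c : F, p = c • (1 : Matrix (Fin 3) (Fin 3) F)) :
    ∃ k : Matrix (Fin 3) (Fin 3) F, IsUnit k ∧
      ¬ Matrix.BlockTriangular (k⁻¹ * p * k) id :=
  stmt_15_general F p hscalar
end
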